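/- arXiv:2402.10838 — 11 statements merged into one kernel-verified Lean document; each statement's English description precedes it below -/
import Mathlib

section
/- Let A, B ∈ SU(2,1), and set x = tr(A), y = tr(B), z = tr(AB), t = tr(AB⁻¹). Then tr(ABA⁻¹B⁻¹) + conj(tr(ABA⁻¹B⁻¹)) = |x|²|y|² + |x|² + |y|² + |z|² + |t|² − 2·Re(x·y·conj(z)) − 2·Re(conj(x)·y·t) − 3; equivalently, 2·Re(tr(ABA⁻¹B⁻¹)) equals this expression. -/
open Matrix

/-- The matrix `J = diag(1,1,-1)`. -/
def Jmat : Matrix (Fin 3) (Fin 3) ℂ := Matrix.diagonal ![1, 1, -1]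

/-- `A ∈ SU(2,1)`: `det A = 1` and `Aᴴ J A = J` (equivalently `A⁻¹ = J Aᴴ J`). -/
def IsSU21 (A : Matrix (Fin 3) (Fin 3) ℂ) : Prop :=
  A.det = 1 ∧ Aᴴ * Jmat * A = Jmat

/-!
For `3 × 3` matrices over any commutative ring, `tr (A B adj A adj B) + tr (B A adj B adj A)` is a
polynomial in `det A`, `det B` and the traces of `A`, `B`, their adjugates and the products `AB`,
`A adj B`, `B adj A`, `adj B adj A` (checked by expanding the entries). On `SU(2,1)` the adjugate
is the inverse, and `Mᴴ J M = J` gives `M⁻¹ = J Mᴴ J`, so `tr M⁻¹ = conj (tr M)`. As `SU(2,1)` is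
a group and `[B, A] = [A, B]⁻¹`, every trace of an inverse in the identity is the conjugate of one
of `x, y, z, t, s`.
-/

namespace Matrix

theorem trace_mul_mul_adjugate_mul_adjugate_add_swap_fin_three {R : Type*} [CommRing R]
    (A B : Matrix (Fin 3) (Fin 3) R) :
    (A * B * A.adjugate * B.adjugate).trace + (B * A * B.adjugate * A.adjugate).trace =
      A.trace * A.adjugate.trace * B.trace * B.adjugate.trace
      + B.det * (A.trace * A.adjugate.trace) + A.det * (B.trace * B.adjugate.trace)
      + (A * B).trace * (B.adjugate * A.adjugate).trace
      + (A * B.adjugate).trace * (B * A.adjugate).trace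
      - A.trace * B.trace * (B.adjugate * A.adjugate).trace
      - A.adjugate.trace * B.adjugate.trace * (A * B).trace
      - A.adjugate.trace * B.trace * (A * B.adjugate).trace
      - A.trace * B.adjugate.trace * (B * A.adjugate).trace
      - 3 * (A.det * B.det) := by
  simp only [trace_fin_three, mul_apply, adjugate_fin_three, det_fin_three, Fin.sum_univ_three,
    of_apply, cons_val', cons_val_zero, cons_val_one, cons_val_two, head_cons, tail_cons,
    empty_val', cons_val_fin_one, head_fin_const]
  ring

section Inverse

variable {n R : Type*} [Fintype n] [DecidableEq n] [CommRing R] {A B : Matrix n n R}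

theorem adjugate_eq_inv_of_det_eq_one (h : A.det = 1) : A.adjugate = A⁻¹ := by
  rw [inv_def, h, Ring.inverse_one, one_smul]

theorem mul_inv_inv_of_isUnit_det (A : Matrix n n R) (hB : IsUnit B.det) :
    (A * B⁻¹)⁻¹ = B * A⁻¹ := by
  rw [Matrix.mul_inv_rev, nonsing_inv_nonsing_inv _ hB]

theorem mul_mul_inv_mul_inv_inv_of_isUnit_det (hA : IsUnit A.det) (hB : IsUnit B.det) :
    (A * B * A⁻¹ * B⁻¹)⁻¹ = B * A * B⁻¹ * A⁻¹ := by
  simp only [Matrix.mul_inv_rev, nonsing_inv_nonsing_inv _ hA, nonsing_inv_nonsing_inv _ hB,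
    Matrix.mul_assoc]

end Inverse

section FormPreserving

variable {n R : Type*} [Fintype n] [CommRing R] [StarRing R] {J M N : Matrix n n R}

theorem conjTranspose_mul_mul_mul_eq (hM : Mᴴ * J * M = J) (hN : Nᴴ * J * N = J) :
    (M * N)ᴴ * J * (M * N) = J :=
  calc (M * N)ᴴ * J * (M * N) = Nᴴ * (Mᴴ * J * M) * N := by
        simp only [conjTranspose_mul, Matrix.mul_assoc]
    _ = J := by rw [hM, hN]

variable [DecidableEq n]

theorem mul_mul_conjTranspose_mul_eq_one (hJ : J * J = 1) (hM : Mᴴ * J * M = J) :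
    J * Mᴴ * J * M = 1 := by
  rw [Matrix.mul_assoc J, Matrix.mul_assoc J, hM, hJ]

theorem inv_eq_of_conjTranspose_mul_mul_eq (hJ : J * J = 1) (hM : Mᴴ * J * M = J) :
    M⁻¹ = J * Mᴴ * J :=
  inv_eq_left_inv (mul_mul_conjTranspose_mul_eq_one hJ hM)

theorem trace_inv_of_conjTranspose_mul_mul_eq (hJ : J * J = 1) (hM : Mᴴ * J * M = J) :
    M⁻¹.trace = star M.trace := by
  rw [inv_eq_of_conjTranspose_mul_mul_eq hJ hM, trace_mul_cycle, hJ, Matrix.one_mul,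
    trace_conjTranspose]

theorem conjTranspose_inv_mul_mul_inv_eq (hJ : J * J = 1) (hM : Mᴴ * J * M = J) :
    (M⁻¹)ᴴ * J * M⁻¹ = J := by
  have hMinv :=
    mul_nonsing_inv M (isUnit_det_of_left_inverse (mul_mul_conjTranspose_mul_eq_one hJ hM))
  calc (M⁻¹)ᴴ * J * M⁻¹ = (M⁻¹)ᴴ * (Mᴴ * J * M) * M⁻¹ := by rw [hM]
    _ = (M * M⁻¹)ᴴ * J * (M * M⁻¹) := by simp only [conjTranspose_mul, Matrix.mul_assoc]
    _ = J := by rw [hMinv, conjTranspose_one, Matrix.one_mul, Matrix.mul_one]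

end FormPreserving

end Matrix

theorem Jmat_mul_self : Jmat * Jmat = 1 := by
  rw [Jmat, diagonal_mul_diagonal, ← diagonal_one]
  congr 1
  ext i
  fin_cases i <;> norm_num

theorem trace_commutator_formula (A B : Matrix (Fin 3) (Fin 3) ℂ)
    (hA : IsSU21 A) (hB : IsSU21 B) (x y z t s : ℂ)
    (hx : x = A.trace) (hy : y = B.trace) (hz : z = (A * B).trace)
    (ht : t = (A * B⁻¹).trace) (hs : s = (A * B * A⁻¹ * B⁻¹).trace) :
    s + (starRingEnd ℂ) s =
      ((‖x‖ ^ 2 * ‖y‖ ^ 2 + ‖x‖ ^ 2 + ‖y‖ ^ 2 +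
        ‖z‖ ^ 2 + ‖t‖ ^ 2 - 2 * (x * y * (starRingEnd ℂ) z).re -
        2 * ((starRingEnd ℂ) x * y * t).re - 3 : ℝ) : ℂ) ∧
    2 * s.re =
      ‖x‖ ^ 2 * ‖y‖ ^ 2 + ‖x‖ ^ 2 + ‖y‖ ^ 2 +
        ‖z‖ ^ 2 + ‖t‖ ^ 2 - 2 * (x * y * (starRingEnd ℂ) z).re -
        2 * ((starRingEnd ℂ) x * y * t).re - 3 := by
  obtain ⟨hAdet, hAJ⟩ := hA
  obtain ⟨hBdet, hBJ⟩ := hB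
  have hAu : IsUnit A.det := hAdet ▸ isUnit_one
  have hBu : IsUnit B.det := hBdet ▸ isUnit_one
  have conj_trace {M : Matrix (Fin 3) (Fin 3) ℂ} (hM : Mᴴ * Jmat * M = Jmat) :
      M⁻¹.trace = starRingEnd ℂ M.trace :=
    trace_inv_of_conjTranspose_mul_mul_eq Jmat_mul_self hM
  have hAinvJ := conjTranspose_inv_mul_mul_inv_eq Jmat_mul_self hAJ
  have hBinvJ := conjTranspose_inv_mul_mul_inv_eq Jmat_mul_self hBJ
  have hABJ := conjTranspose_mul_mul_mul_eq hAJ hBJ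
  have key := trace_mul_mul_adjugate_mul_adjugate_add_swap_fin_three A B
  rw [adjugate_eq_inv_of_det_eq_one hAdet, adjugate_eq_inv_of_det_eq_one hBdet, hAdet, hBdet,
    ← mul_mul_inv_mul_inv_inv_of_isUnit_det hAu hBu, ← mul_inv_inv_of_isUnit_det A hBu,
    ← Matrix.mul_inv_rev] at key
  rw [conj_trace hAJ, conj_trace hBJ, conj_trace hABJ,
    conj_trace (conjTranspose_mul_mul_mul_eq hAJ hBinvJ),
    conj_trace (conjTranspose_mul_mul_mul_eq (conjTranspose_mul_mul_mul_eq hABJ hAinvJ) hBinvJ),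
    ← hx, ← hy, ← hz, ← ht, ← hs] at key
  rw [Complex.add_conj, Complex.ofReal_inj, and_self, ← Complex.ofReal_inj]
  push_cast
  simp only [← Complex.mul_conj', Complex.re_eq_add_conj, map_mul, Complex.conj_conj]
  linear_combination key
end

section
/- Let c ∈ ℂ and let C = max(2·3^(1/4), √|Re(c)|). Let x, y, z, t ∈ ℂ satisfy P(x,y,z,t) = 2·Re(c). If |x| ≥ C, |y| ≥ C and |t| ≥ |z|, then (C/4)·max(|x|, |y|) < |t| < 5·|x|·|y|. -/
/-!
Bounding both real parts in `P` by products of moduli and using `|x|², |y|² ≥ C² ≥ Re c` reduces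
the relation `P = 2 Re c` to the real inequality `w² + u² + v² - 3 ≤ 2w(u + v)` for `w = |x||y|`,
`u = |z|`, `v = |t|`, where `w² ≥ C⁴ ≥ 48`. If `v ≤ w/4` then also `u ≤ w/4`, and the left side
exceeds the right by at least `w²/8 - 3 > 0`; if `v ≥ 5w` then it exceeds it by at least
`v(v - 2w) - 3 > 0`. Finally `C · max(|x|, |y|) ≤ |x||y|` turns `w/4 < v` into the lower bound.
-/

/-- The expression `P(x,y,z,t)` from the trace relation. -/
noncomputable def Pfun (x y z t : ℂ) : ℝ :=
  ‖x‖ ^ 2 * ‖y‖ ^ 2 + ‖x‖ ^ 2 + ‖y‖ ^ 2 +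
    ‖z‖ ^ 2 + ‖t‖ ^ 2 - 2 * (x * y * (starRingEnd ℂ) z).re -
    2 * ((starRingEnd ℂ) x * y * t).re - 3

open ComplexConjugate

lemma Complex.re_mul_mul_le (p q r : ℂ) : (p * q * r).re ≤ ‖p‖ * ‖q‖ * ‖r‖ := by
  simpa only [norm_mul] using Complex.re_le_norm (p * q * r)

lemma sub_le_Pfun (x y z t : ℂ) :
    (‖x‖ * ‖y‖) ^ 2 + ‖z‖ ^ 2 + ‖t‖ ^ 2 - 3 - 2 * (‖x‖ * ‖y‖) * (‖z‖ + ‖t‖) + (‖x‖ ^ 2 + ‖y‖ ^ 2)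
      ≤ Pfun x y z t := by
  have hz := Complex.re_mul_mul_le x y (conj z)
  have ht := Complex.re_mul_mul_le (conj x) y t
  rw [Complex.norm_conj] at hz ht
  unfold Pfun
  linarith

lemma div_four_lt_and_lt_five_mul {w u v : ℝ} (hw : 24 < w ^ 2) (hw0 : 0 ≤ w) (hu : 0 ≤ u)
    (huv : u ≤ v) (h : w ^ 2 + u ^ 2 + v ^ 2 - 3 ≤ 2 * w * (u + v)) :
    w / 4 < v ∧ v < 5 * w := by
  constructor
  · by_contra! hv
    -- `s ↦ s² - 2ws` decreases on `[0, w]`, so it is at least `-7w²/16` on `[0, w/4]`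
    have hu' : 0 ≤ (w / 4 - u) * (7 * w / 4 - u) := mul_nonneg (by linarith) (by linarith)
    have hv' : 0 ≤ (w / 4 - v) * (7 * w / 4 - v) := mul_nonneg (by linarith) (by linarith)
    nlinarith
  · by_contra! hv
    have hv' : 0 ≤ (v - 5 * w) * v := mul_nonneg (by linarith) (by linarith)
    have huv' : 0 ≤ (v - u) * w := mul_nonneg (by linarith) hw0
    nlinarith

lemma mul_max_le_mul {C a b : ℝ} (hC : 0 ≤ C) (ha : C ≤ a) (hb : C ≤ b) :
    C * max a b ≤ a * b := by
  rcases le_total a b with hab | hab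
  · rw [max_eq_right hab]
    exact mul_le_mul_of_nonneg_right ha (hC.trans hb)
  · rw [max_eq_left hab, mul_comm C]
    exact mul_le_mul_of_nonneg_left hb (hC.trans ha)

lemma two_mul_rpow_quarter_pow_four : (2 * (3 : ℝ) ^ ((1 : ℝ) / 4)) ^ 4 = 48 := by
  have h : ((3 : ℝ) ^ ((4 : ℕ)⁻¹ : ℝ)) ^ 4 = 3 := Real.rpow_inv_natCast_pow (by norm_num) (by norm_num)
  rw [mul_pow, one_div]
  norm_num at h ⊢
  rw [h]
  norm_num

theorem bound_lemma (c : ℂ) (C : ℝ)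
    (hC : C = max (2 * (3 : ℝ) ^ ((1 : ℝ) / 4)) (Real.sqrt |c.re|))
    (x y z t : ℂ) (hP : Pfun x y z t = 2 * c.re)
    (hx : C ≤ ‖x‖) (hy : C ≤ ‖y‖)
    (hzt : ‖z‖ ≤ ‖t‖) :
    C / 4 * max (‖x‖) (‖y‖) < ‖t‖ ∧
      ‖t‖ < 5 * ‖x‖ * ‖y‖ := by
  have hbase : 0 ≤ 2 * (3 : ℝ) ^ ((1 : ℝ) / 4) := by positivity
  have hC0 : 0 ≤ C := hC ▸ hbase.trans (le_max_left _ _)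
  have hC4 : 48 ≤ C ^ 4 := two_mul_rpow_quarter_pow_four ▸
    pow_le_pow_left₀ hbase (hC ▸ le_max_left _ _) 4
  have hcC : |c.re| ≤ C ^ 2 := (Real.sqrt_le_left hC0).1 (hC ▸ le_max_right _ _)
  have hw : C * max ‖x‖ ‖y‖ ≤ ‖x‖ * ‖y‖ := mul_max_le_mul hC0 hx hy
  have hCw : C ^ 2 ≤ ‖x‖ * ‖y‖ := by rw [sq]; exact mul_le_mul hx hy hC0 (hC0.trans hx)
  have hw24 : 24 < (‖x‖ * ‖y‖) ^ 2 := by nlinarith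
  have hre : 2 * c.re ≤ ‖x‖ ^ 2 + ‖y‖ ^ 2 := by
    have hx2 : C ^ 2 ≤ ‖x‖ ^ 2 := pow_le_pow_left₀ hC0 hx 2
    have hy2 : C ^ 2 ≤ ‖y‖ ^ 2 := pow_le_pow_left₀ hC0 hy 2
    linarith [le_abs_self c.re]
  have hquad := sub_le_Pfun x y z t
  obtain ⟨hlow, hup⟩ := div_four_lt_and_lt_five_mul hw24 (by positivity) (norm_nonneg z) hzt
    (by linarith)
  constructor <;> linarith
end

section
/- Let c ∈ ℂ and let x, y, z, t ∈ ℂ satisfy P(x,y,z,t) = 2·Re(c). Suppose the fork conditions hold: ( |t| > |t − x·conj(y) + y·z| or |t| > |t − x·conj(y) + conj(x·z)| ) and ( |z| > |z − x·y + conj(x·t)| or |z| > |z − x·y + conj(y)·t| ). Then min(|x|, |y|) ≤ max(6, √|Re(c)|). -/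
/-!
Write `a, b, r, s` for `|x|, |y|, |z|, |t|` and `n = ab`. Each fork condition has the shape
`|w - u + v| < |w|` with `|u| = n`, so `|v| < n + 2|w|`; as `|v|` is `ar` or `br` (resp. `as` or `bs`),
this gives `min(a,b)·r < n + 2s` and `min(a,b)·s < n + 2r`. If `min(a,b) > 6`, adding these yields
`2(r + s) < n`. Bounding the real parts in `P` by moduli turns `P = 2 Re c` into
`n² + a² + b² + r² + s² - 2n(r + s) - 3 ≤ 2 Re c`, and `Re c < min(a,b)²` cancels `a² + b²`.
But for `r + s ≤ n/2` the quadratic `n² - 2n(r + s) + r² + s²` is at least `n²/8 > 3`.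
-/

open ComplexConjugate

lemma norm_lt_of_norm_sub_add_lt {E : Type*} [SeminormedAddCommGroup E] {w u v : E}
    (h : ‖w - u + v‖ < ‖w‖) : ‖v‖ < ‖u‖ + 2 * ‖w‖ :=
  calc ‖v‖ = ‖(w - u + v) + -w + u‖ := by congr 1; abel
    _ ≤ ‖w - u + v‖ + ‖w‖ + ‖u‖ := norm_add₃_le.trans_eq (by rw [norm_neg])
    _ < ‖u‖ + 2 * ‖w‖ := by linarith

lemma min_norm_mul_norm_lt_of_fork_t {x y z t : ℂ}
    (h : ‖t - x * conj y + y * z‖ < ‖t‖ ∨ ‖t - x * conj y + conj (x * z)‖ < ‖t‖) :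
    min ‖x‖ ‖y‖ * ‖z‖ < ‖x‖ * ‖y‖ + 2 * ‖t‖ := by
  rcases h with h | h <;> have h' := norm_lt_of_norm_sub_add_lt h <;>
    simp only [norm_mul, Complex.norm_conj] at h'
  · exact (mul_le_mul_of_nonneg_right (min_le_right _ _) (norm_nonneg z)).trans_lt (by linarith)
  · exact (mul_le_mul_of_nonneg_right (min_le_left _ _) (norm_nonneg z)).trans_lt (by linarith)

lemma min_norm_mul_norm_lt_of_fork_z {x y z t : ℂ}
    (h : ‖z - x * y + conj (x * t)‖ < ‖z‖ ∨ ‖z - x * y + conj y * t‖ < ‖z‖) :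
    min ‖x‖ ‖y‖ * ‖t‖ < ‖x‖ * ‖y‖ + 2 * ‖z‖ := by
  rcases h with h | h <;> have h' := norm_lt_of_norm_sub_add_lt h <;>
    simp only [norm_mul, Complex.norm_conj] at h'
  · exact (mul_le_mul_of_nonneg_right (min_le_left _ _) (norm_nonneg t)).trans_lt (by linarith)
  · exact (mul_le_mul_of_nonneg_right (min_le_right _ _) (norm_nonneg t)).trans_lt (by linarith)

lemma le_Pfun (x y z t : ℂ) :
    (‖x‖ * ‖y‖) ^ 2 + ‖x‖ ^ 2 + ‖y‖ ^ 2 + ‖z‖ ^ 2 + ‖t‖ ^ 2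
      - 2 * (‖x‖ * ‖y‖) * (‖z‖ + ‖t‖) - 3 ≤ Pfun x y z t := by
  have hz : (x * y * conj z).re ≤ ‖x‖ * ‖y‖ * ‖z‖ := by
    simpa only [norm_mul, Complex.norm_conj] using Complex.re_le_norm (x * y * conj z)
  have ht : (conj x * y * t).re ≤ ‖x‖ * ‖y‖ * ‖t‖ := by
    simpa only [norm_mul, Complex.norm_conj] using Complex.re_le_norm (conj x * y * t)
  rw [Pfun]
  linarith

lemma two_mul_mul_add_add_three_lt {n r s : ℝ} (hn : 5 ≤ n) (hrs : 2 * (r + s) ≤ n) :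
    2 * n * (r + s) + 3 < n ^ 2 + r ^ 2 + s ^ 2 := by
  have h : 3 * n ≤ 2 * (2 * n - (r + s)) := by linarith
  nlinarith [sq_nonneg (r - s), mul_self_le_mul_self (by linarith) h]

theorem fork_lemma (c : ℂ) (x y z t : ℂ) (hP : Pfun x y z t = 2 * c.re)
    (hfork_t : ‖t - x * (starRingEnd ℂ) y + y * z‖ < ‖t‖ ∨
      ‖t - x * (starRingEnd ℂ) y + (starRingEnd ℂ) (x * z)‖ < ‖t‖)
    (hfork_z : ‖z - x * y + (starRingEnd ℂ) (x * t)‖ < ‖z‖ ∨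
      ‖z - x * y + (starRingEnd ℂ) y * t‖ < ‖z‖) :
    min (‖x‖) (‖y‖) ≤ max 6 (Real.sqrt |c.re|) := by
  by_contra! hmin
  set m := min ‖x‖ ‖y‖
  have hm6 : 6 < m := (le_max_left _ _).trans_lt hmin
  have hc : c.re < m ^ 2 :=
    (le_abs_self _).trans_lt ((Real.sqrt_lt' (by linarith)).mp ((le_max_right _ _).trans_lt hmin))
  have hcx : c.re ≤ ‖x‖ ^ 2 := by nlinarith [min_le_left ‖x‖ ‖y‖]
  have hcy : c.re ≤ ‖y‖ ^ 2 := by nlinarith [min_le_right ‖x‖ ‖y‖]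
  have hn : 36 ≤ ‖x‖ * ‖y‖ := by nlinarith [min_le_left ‖x‖ ‖y‖, min_le_right ‖x‖ ‖y‖]
  have hrs : 2 * (‖z‖ + ‖t‖) ≤ ‖x‖ * ‖y‖ := by
    nlinarith [min_norm_mul_norm_lt_of_fork_t hfork_t, min_norm_mul_norm_lt_of_fork_z hfork_z,
      norm_nonneg z, norm_nonneg t]
  linarith [le_Pfun x y z t, two_mul_mul_add_add_three_lt (by linarith) hrs]
end

section
/- Let c ∈ ℂ, let C = max(6, √|Re(c)|) and let ε₀ = C²·(C−6)/4. Let 0 < ε < ε₀ and let x, y, z, t ∈ ℂ satisfy P(x,y,z,t) = 2·Re(c). Suppose the ε-relaxed fork conditions hold: ( |t| > |t − x·conj(y) + y·z| − ε or |t| > |t − x·conj(y) + conj(x·z)| − ε ) and ( |z| > |z − x·y + conj(x·t)| − ε or |z| > |z − x·y + conj(y)·t| − ε ). Then min(|x|, |y|) ≤ C. -/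
/-!
Suppose `‖x‖, ‖y‖ > C`. Expanding, `P = 2 Re c` says that `u = ‖z - x y‖` and `v = ‖t - x ȳ‖` satisfy
`u² + v² = 2 Re c + 3 + ‖x‖²‖y‖² - ‖x‖² - ‖y‖²`. Each fork condition, via the triangle inequality,
bounds `C ‖z‖` (resp. `C ‖t‖`) by `2 ‖t‖ + ‖x y‖ + ε` (resp. `2 ‖z‖ + ‖x y‖ + ε`); adding the two and
using `ε < ε₀` gives `‖z‖ + ‖t‖ < ‖x y‖ / 2`. Hence `u + v > 3 ‖x y‖ / 2`, so `u² + v² > 9 ‖x y‖² / 8`,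
which is too large for the identity since `Re c ≤ C²`.
-/

open ComplexConjugate

lemma norm_sub_sq_add_norm_sub_sq_eq_Pfun (x y z t : ℂ) :
    ‖z - x * y‖ ^ 2 + ‖t - x * conj y‖ ^ 2 =
      Pfun x y z t + 3 + ‖x‖ ^ 2 * ‖y‖ ^ 2 - ‖x‖ ^ 2 - ‖y‖ ^ 2 := by
  simp only [Pfun, Complex.sq_norm, Complex.normSq_apply, Complex.mul_re, Complex.mul_im,
    Complex.sub_re, Complex.sub_im, Complex.conj_re, Complex.conj_im]
  ring

lemma norm_lt_of_norm_sub_add_sub_lt {E : Type*} [SeminormedAddCommGroup E] {ε : ℝ} {t u v : E}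
    (h : ‖t - u + v‖ - ε < ‖t‖) : ‖v‖ < 2 * ‖t‖ + ‖u‖ + ε := by
  have hv : ‖v‖ ≤ ‖t - u + v‖ + ‖t - u‖ := by
    simpa using norm_sub_le (t - u + v) (t - u)
  linarith [norm_sub_le t u]

lemma lt_of_norm_sub_add_sub_lt_or {E : Type*} [SeminormedAddCommGroup E] {ε r : ℝ}
    {t u v v' : E} (h : ‖t - u + v‖ - ε < ‖t‖ ∨ ‖t - u + v'‖ - ε < ‖t‖)
    (hv : r ≤ ‖v‖) (hv' : r ≤ ‖v'‖) : r < 2 * ‖t‖ + ‖u‖ + ε := by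
  rcases h with h | h
  · exact hv.trans_lt (norm_lt_of_norm_sub_add_sub_lt h)
  · exact hv'.trans_lt (norm_lt_of_norm_sub_add_sub_lt h)

lemma add_lt_half_of_mul_lt {C ε p Z T : ℝ} (hC : 6 ≤ C) (hε : ε < C ^ 2 * (C - 6) / 4)
    (hp : C ^ 2 ≤ p) (hZ : C * Z < 2 * T + p + ε) (hT : C * T < 2 * Z + p + ε) :
    Z + T < p / 2 := by
  have hεp : 4 * ε ≤ (C - 6) * p := by nlinarith
  have hsum : (C - 2) * (Z + T) < (C - 2) * (p / 2) := by linarith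
  exact lt_of_mul_lt_mul_left hsum (by linarith)

lemma not_sq_add_sq_le_of_add_lt_half {C a b Z T u v : ℝ} (hC : 6 ≤ C) (ha : C < a) (hb : C < b)
    (hZT : Z + T < a * b / 2) (hu : a * b - Z ≤ u) (hv : a * b - T ≤ v) :
    ¬ u ^ 2 + v ^ 2 ≤ 2 * C ^ 2 + 3 + a ^ 2 * b ^ 2 - a ^ 2 - b ^ 2 := by
  have hab : 36 < a * b := by nlinarith
  have huv : 3 * (a * b) / 2 < u + v := by linarith
  nlinarith [sq_nonneg (u - v), mul_self_lt_mul_self (by positivity) huv]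

theorem eps_fork_lemma_general (c : ℂ) (C ε₀ ε : ℝ)
    (hC : C = max 6 (Real.sqrt |c.re|)) (hε₀ : ε₀ = C ^ 2 * (C - 6) / 4)
    (hεε₀ : ε < ε₀)
    (x y z t : ℂ) (hP : Pfun x y z t = 2 * c.re)
    (hfork_t : ‖(t - x * (starRingEnd ℂ) y + y * z)‖ - ε < ‖t‖ ∨
      ‖(t - x * (starRingEnd ℂ) y + (starRingEnd ℂ) (x * z))‖ - ε < ‖t‖)
    (hfork_z : ‖(z - x * y + (starRingEnd ℂ) (x * t))‖ - ε < ‖z‖ ∨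
      ‖(z - x * y + (starRingEnd ℂ) y * t)‖ - ε < ‖z‖) :
    min (‖x‖) (‖y‖) ≤ C := by
  by_contra! hm
  obtain ⟨hx, hy⟩ := lt_min_iff.mp hm
  have hC6 : 6 ≤ C := hC ▸ le_max_left _ _
  have hre : c.re ≤ C ^ 2 := by
    have : Real.sqrt |c.re| ≤ C := hC ▸ le_max_right _ _
    nlinarith [le_abs_self c.re, Real.sq_sqrt (abs_nonneg c.re), Real.sqrt_nonneg |c.re|]
  have hxy : ‖x * y‖ = ‖x‖ * ‖y‖ := norm_mul x y
  have hxy' : ‖x * conj y‖ = ‖x‖ * ‖y‖ := by rw [norm_mul, Complex.norm_conj]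
  have hZ : min ‖x‖ ‖y‖ * ‖z‖ < 2 * ‖t‖ + ‖x‖ * ‖y‖ + ε := hxy' ▸
    lt_of_norm_sub_add_sub_lt_or hfork_t (by simp [mul_le_mul_of_nonneg_right])
      (by simp [mul_le_mul_of_nonneg_right])
  have hT : min ‖x‖ ‖y‖ * ‖t‖ < 2 * ‖z‖ + ‖x‖ * ‖y‖ + ε := hxy ▸
    lt_of_norm_sub_add_sub_lt_or hfork_z (by simp [mul_le_mul_of_nonneg_right])
      (by simp [mul_le_mul_of_nonneg_right])
  have hZT : ‖z‖ + ‖t‖ < ‖x‖ * ‖y‖ / 2 :=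
    add_lt_half_of_mul_lt hC6 (hε₀ ▸ hεε₀) (by nlinarith)
      ((mul_le_mul_of_nonneg_right hm.le (norm_nonneg z)).trans_lt hZ)
      ((mul_le_mul_of_nonneg_right hm.le (norm_nonneg t)).trans_lt hT)
  refine not_sq_add_sq_le_of_add_lt_half hC6 hx hy hZT
    (hxy ▸ norm_sub_norm_le (x * y) z |>.trans_eq (norm_sub_rev _ _))
    (hxy' ▸ norm_sub_norm_le (x * conj y) t |>.trans_eq (norm_sub_rev _ _)) ?_
  linarith [norm_sub_sq_add_norm_sub_sq_eq_Pfun x y z t]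

theorem eps_fork_lemma (c : ℂ) (C ε₀ ε : ℝ)
    (hC : C = max 6 (Real.sqrt |c.re|)) (hε₀ : ε₀ = C ^ 2 * (C - 6) / 4)
    (hε : 0 < ε) (hεε₀ : ε < ε₀)
    (x y z t : ℂ) (hP : Pfun x y z t = 2 * c.re)
    (hfork_t : ‖(t - x * (starRingEnd ℂ) y + y * z)‖ - ε < ‖t‖ ∨
      ‖(t - x * (starRingEnd ℂ) y + (starRingEnd ℂ) (x * z))‖ - ε < ‖t‖)
    (hfork_z : ‖(z - x * y + (starRingEnd ℂ) (x * t))‖ - ε < ‖z‖ ∨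
      ‖(z - x * y + (starRingEnd ℂ) y * t)‖ - ε < ‖z‖) :
    min (‖x‖) (‖y‖) ≤ C :=
  eps_fork_lemma_general c C ε₀ ε hC hε₀ hεε₀ x y z t hP hfork_t hfork_z
end

section
/- Let c ∈ ℂ and let C be a real number with C ≥ max(6, √|Re(c)|). Let x, y, z, t ∈ ℂ satisfy P(x,y,z,t) = 2·Re(c). If |z| ≤ C and |t| ≤ C, then min(|x|, |y|) ≤ C. -/
theorem distance_one_lemma (c : ℂ) (C : ℝ) (hC : max 6 (Real.sqrt |c.re|) ≤ C)
    (x y z t : ℂ) (hP : Pfun x y z t = 2 * c.re)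
    (hz : ‖z‖ ≤ C) (ht : ‖t‖ ≤ C) :
    min (‖x‖) (‖y‖) ≤ C := by
  by_contra h
  push_neg at h
  obtain ⟨hx, hy⟩ := lt_min_iff.mp h
  have hC6 : (6:ℝ) ≤ C := le_trans (le_max_left _ _) hC
  have hsq : Real.sqrt |c.re| ≤ C := le_trans (le_max_right _ _) hC
  have hc2 : |c.re| ≤ C ^ 2 := by
    nlinarith [Real.sq_sqrt (abs_nonneg c.re), Real.sqrt_nonneg |c.re|]
  have hcre : c.re ≤ C ^ 2 := le_trans (le_abs_self _) hc2
  have h1 : (x * y * (starRingEnd ℂ) z).re ≤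
      ‖x‖ * ‖y‖ * ‖z‖ := by
    calc (x * y * (starRingEnd ℂ) z).re ≤ ‖x * y * (starRingEnd ℂ) z‖ :=
          Complex.re_le_norm _
      _ = ‖x‖ * ‖y‖ * ‖z‖ := by
          simp [map_mul]
  have h2 : ((starRingEnd ℂ) x * y * t).re ≤
      ‖x‖ * ‖y‖ * ‖t‖ := by
    calc ((starRingEnd ℂ) x * y * t).re ≤ ‖(starRingEnd ℂ) x * y * t‖ :=
          Complex.re_le_norm _
      _ = ‖x‖ * ‖y‖ * ‖t‖ := by
          simp [map_mul]
  have hz0 : (0:ℝ) ≤ ‖z‖ := norm_nonneg _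
  have ht0 : (0:ℝ) ≤ ‖t‖ := norm_nonneg _
  have hC0 : (0:ℝ) < C := by linarith
  have hx0 : (0:ℝ) < ‖x‖ := by linarith
  have hy0 : (0:ℝ) < ‖y‖ := by linarith
  have hXY : C ^ 2 < ‖x‖ * ‖y‖ := by nlinarith
  have key : 0 < (‖x‖ * ‖y‖ - C ^ 2) *
      (‖x‖ * ‖y‖ + C ^ 2 - 4 * C) := by
    apply mul_pos (by linarith)
    nlinarith
  have hzz : ‖x‖ * ‖y‖ * ‖z‖ ≤
      ‖x‖ * ‖y‖ * C :=
    mul_le_mul_of_nonneg_left hz (by positivity)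
  have htt : ‖x‖ * ‖y‖ * ‖t‖ ≤
      ‖x‖ * ‖y‖ * C :=
    mul_le_mul_of_nonneg_left ht (by positivity)
  have hP3 : (216:ℝ) ≤ C ^ 3 := by nlinarith
  have hC4 : (432:ℝ) ≤ C ^ 4 - 4 * C ^ 3 := by nlinarith
  unfold Pfun at hP
  nlinarith [sq_nonneg (‖x‖ - C), sq_nonneg (‖y‖ - C),
    sq_nonneg (‖z‖), sq_nonneg (‖t‖),
    mul_pos hC0 (sub_pos.2 hx), mul_pos hC0 (sub_pos.2 hy)]
end

section
/- Let c ∈ ℂ and let C be a real number with C ≥ max(6, √|Re(c)|). Let x, y, z, t ∈ ℂ satisfy P(x,y,z,t) = 2·Re(c). If |z| ≤ C and |z + conj(y)·t − x·y| ≤ C, then min(|x|, |y|, |t|) ≤ C. -/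
/-!
Completing squares, `P(x,y,z,t) = |xy - z|² + |yt - x|² - (|y|² - 1)(|t|² - 1) - 2`.
If `|x|, |y|, |t| > C`, write `w = |y||t| > C²`. The two bounded quantities `z` and
`z + ȳt - xy` force `|xy - z| ≥ max(w, |x||y|) - C`, and `|yt - x| ≥ w - |x|`.
Either `|x| ≥ w/4`, and then `|xy - z| ≥ 4w/3`, or `|x| < w/4`, and then
`|xy - z|² + |yt - x|² ≥ (25/36 + 9/16) w²`. In both cases the squares exceed `w² + 3`,
which makes `P > 2C² ≥ 2 Re c`.
-/

lemma Pfun_eq (x y z t : ℂ) :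
    Pfun x y z t = ‖x * y - z‖ ^ 2 + ‖y * t - x‖ ^ 2 -
      (‖y‖ ^ 2 - 1) * (‖t‖ ^ 2 - 1) - 2 := by
  simp only [Pfun, Complex.sq_norm, Complex.normSq_apply, Complex.sub_re, Complex.sub_im,
    Complex.mul_re, Complex.mul_im, Complex.conj_re, Complex.conj_im]
  ring

lemma sq_add_three_lt_sq_add_sq {C A B V S₁ S₂ : ℝ} (hC : 6 ≤ C)
    (hA : C < A) (hB : C < B) (hV : C < V)
    (h₁ : B * V - C ≤ S₁) (h₁' : A * B - C ≤ S₁) (h₂ : B * V - A ≤ S₂) :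
    (B * V) ^ 2 + 3 < S₁ ^ 2 + S₂ ^ 2 := by
  set w := B * V
  have hw : C ^ 2 < w := by nlinarith
  have hwC : 6 * C ≤ w := by nlinarith
  rcases le_or_gt (w / 4) A with hAw | hAw
  · have hS₁ : 4 / 3 * w ≤ S₁ := by nlinarith
    nlinarith [sq_nonneg S₂]
  · have hS₁ : 5 / 6 * w ≤ S₁ := by linarith
    have hS₂ : 3 / 4 * w ≤ S₂ := by linarith
    nlinarith

lemma re_le_sq_of_sqrt_abs_le {c : ℂ} {C : ℝ} (h : Real.sqrt |c.re| ≤ C) : c.re ≤ C ^ 2 :=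
  (le_abs_self _).trans ((Real.sqrt_le_left ((Real.sqrt_nonneg _).trans h)).1 h)

theorem distance_two_lemma (c : ℂ) (C : ℝ) (hC : max 6 (Real.sqrt |c.re|) ≤ C)
    (x y z t : ℂ) (hP : Pfun x y z t = 2 * c.re)
    (hz : ‖z‖ ≤ C)
    (hz' : ‖z + (starRingEnd ℂ) y * t - x * y‖ ≤ C) :
    min (‖x‖) (min (‖y‖) (‖t‖)) ≤ C := by
  by_contra! h
  simp only [lt_min_iff] at h
  obtain ⟨hx, hy, ht⟩ := h
  obtain ⟨hC₆, hCc⟩ := max_le_iff.1 hC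
  have h₁ : ‖y‖ * ‖t‖ - C ≤ ‖x * y - z‖ :=
    calc ‖y‖ * ‖t‖ - C
        ≤ ‖(starRingEnd ℂ) y * t‖ - ‖z + (starRingEnd ℂ) y * t - x * y‖ := by
          rw [norm_mul, Complex.norm_conj]; linarith
      _ ≤ ‖(starRingEnd ℂ) y * t - (z + (starRingEnd ℂ) y * t - x * y)‖ := norm_sub_norm_le _ _
      _ = ‖x * y - z‖ := by ring_nf
  have h₁' : ‖x‖ * ‖y‖ - C ≤ ‖x * y - z‖ := by
    have := norm_sub_norm_le (x * y) z
    rw [norm_mul] at this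
    linarith
  have h₂ : ‖y‖ * ‖t‖ - ‖x‖ ≤ ‖y * t - x‖ := by
    simpa only [norm_mul] using norm_sub_norm_le (y * t) x
  have hsq := sq_add_three_lt_sq_add_sq hC₆ hx hy ht h₁ h₁' h₂
  have hre := re_le_sq_of_sqrt_abs_le hCc
  rw [Pfun_eq] at hP
  nlinarith
end

section
/- Let A ∈ SU(2,1) with f(tr(A)) = 0. Then there exists a real constant c > 0 such that for every natural number n ≥ 1 and all indices i, j ∈ {1,2,3}, the (i,j) entry of Aⁿ has absolute value at most c·n². -/
open Matrix

/-- The function `f(t) = |t|⁴ − 8 Re(t³) + 18 |t|² − 27`. -/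
noncomputable def fdisc (t : ℂ) : ℝ :=
  ‖t‖ ^ 4 - 8 * (t ^ 3).re + 18 * ‖t‖ ^ 2 - 27
/-!
With `t = tr A`, the characteristic polynomial of `A ∈ SU(2,1)` is `X³ - t X² + t̄ X - 1`, since
`adj A = A⁻¹ = J Aᴴ J` has trace `t̄`, and `f(t)` is exactly its discriminant. So `f(t) = 0`
yields a double eigenvalue: `(A - x)² (A - y) = 0` with `x² y = 1`, and comparing the
coefficient `t̄ = x² + 2xy` with the conjugate of `t = 2x + y` forces `|x| = |y| = 1`.
With `N = A - x` one gets `Aᵐ⁺¹ = xᵐ⁺¹ + (m + 1) xᵐ N + cₘ N²`, where `cₘ₊₁ = cₘ y + (m + 1) xᵐ`,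
so `|cₘ| ≤ (m + 1)²`.
-/

open ComplexConjugate

theorem Matrix.pow_three_fin_three {R : Type*} [CommRing R] (A : Matrix (Fin 3) (Fin 3) R) :
    A ^ 3 = A.trace • A ^ 2 - A.adjugate.trace • A + A.det • 1 := by
  ext i j
  fin_cases i <;> fin_cases j <;>
    simp [pow_succ, mul_apply, Fin.sum_univ_three, trace_fin_three, det_fin_three,
      adjugate_fin_three] <;> ring

section LinftyOp

open scoped Matrix.Norms.Operator

theorem Matrix.norm_entry_le_linfty_opNorm {m n α : Type*} [Fintype m] [Fintype n] [DecidableEq n]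
    [NormedRing α] [NormOneClass α] (A : Matrix m n α) (i : m) (j : n) : ‖A i j‖ ≤ ‖A‖ :=
  calc ‖A i j‖ = ‖(A *ᵥ Pi.single j 1) i‖ := by rw [mulVec_single_one]; rfl
    _ ≤ ‖A *ᵥ Pi.single j 1‖ := norm_le_pi_norm _ i
    _ ≤ ‖A‖ * ‖(Pi.single j 1 : n → α)‖ := linfty_opNorm_mulVec _ _
    _ = ‖A‖ := by rw [Pi.norm_single, norm_one, mul_one]

end LinftyOp

theorem IsSU21.trace_adjugate {A : Matrix (Fin 3) (Fin 3) ℂ} (hA : IsSU21 A) :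
    A.adjugate.trace = conj A.trace := by
  have hJJ : Jmat * Jmat = 1 := by
    rw [Jmat, diagonal_mul_diagonal, ← diagonal_one]
    congr 1; ext i; fin_cases i <;> simp
  have hleft : (Jmat * Aᴴ * Jmat) * A = 1 := by
    rw [show Jmat * Aᴴ * Jmat * A = Jmat * (Aᴴ * Jmat * A) by simp only [Matrix.mul_assoc],
      hA.2, hJJ]
  calc A.adjugate.trace = A⁻¹.trace := by rw [inv_def, hA.1, Ring.inverse_one, one_smul]
    _ = (Jmat * Jmat * Aᴴ).trace := by rw [inv_eq_left_inv hleft, trace_mul_cycle]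
    _ = conj A.trace := by rw [hJJ, Matrix.one_mul, trace_conjTranspose]; rfl

theorem Cubic.exists_double_root_of_discr_eq_zero {K : Type*} [Field K] [IsAlgClosed K]
    {b c d : K} (h : (⟨1, b, c, d⟩ : Cubic K).discr = 0) :
    ∃ x y : K, b = -(2 * x + y) ∧ c = x ^ 2 + 2 * x * y ∧ d = -(x ^ 2 * y) := by
  set P : Cubic K := ⟨1, b, c, d⟩
  have ha : P.a ≠ 0 := one_ne_zero
  obtain ⟨x, y, z, h3⟩ :=
    (P.splits_iff_roots_eq_three ha).mp (IsAlgClosed.splits (P.toPoly.map (RingHom.id K)))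
  have hb := P.b_eq_three_roots ha h3
  have hc := P.c_eq_three_roots ha h3
  have hd := P.d_eq_three_roots ha h3
  have hdisc := P.discr_eq_prod_three_roots ha h3
  simp only [P, RingHom.id_apply, one_mul, h] at hb hc hd hdisc
  obtain rfl | rfl | rfl : x = y ∨ x = z ∨ y = z := by
    simpa [sub_eq_zero, or_assoc] using hdisc.symm
  · exact ⟨x, z, by linear_combination hb, by linear_combination hc, by linear_combination hd⟩
  · exact ⟨x, y, by linear_combination hb, by linear_combination hc, by linear_combination hd⟩
  · exact ⟨y, x, by linear_combination hb, by linear_combination hc, by linear_combination hd⟩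

theorem ofReal_fdisc (t : ℂ) : (fdisc t : ℂ) = (⟨1, -t, conj t, -1⟩ : Cubic ℂ).discr := by
  have hnorm : t * conj t = (‖t‖ : ℂ) ^ 2 := Complex.mul_conj' t
  have hre : t ^ 3 + conj t ^ 3 = 2 * ((t ^ 3).re : ℂ) := by
    rw [← map_pow, Complex.add_conj]; push_cast; ring
  simp only [fdisc, Cubic.discr]
  push_cast
  linear_combination (-(t * conj t) - (‖t‖ : ℂ) ^ 2 - 18) * hnorm + 4 * hre

theorem norm_eq_one_of_conj_eq {x y : ℂ} (hxy : x ^ 2 * y = 1)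
    (h : conj (2 * x + y) = x ^ 2 + 2 * x * y) : ‖x‖ = 1 := by
  have hx : x ≠ 0 := by rintro rfl; simp at hxy
  set r := ‖x‖
  have hr : 0 < r := norm_pos_iff.mpr hx
  have hconj : conj x ^ 2 * conj y = 1 := by simpa using congrArg conj hxy
  have hu : x * conj x = (r : ℂ) ^ 2 := Complex.mul_conj' x
  -- `x x̄² · h` reads `2 x̄² (u - 1) = x (u² - 1)` with `u = x x̄ = r²`; its norm gives `hfactor`.
  have key : 2 * conj x ^ 2 * ((r ^ 2 - 1 : ℝ) : ℂ) =
      x * ((r ^ 2 - 1 : ℝ) : ℂ) * ((r ^ 2 + 1 : ℝ) : ℂ) := by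
    simp only [map_add, map_mul, map_ofNat] at h
    push_cast
    linear_combination (x * conj x ^ 2) * h - x * hconj + 2 * conj x ^ 2 * hxy +
      (-2 * conj x ^ 2 + x * ((r : ℂ) ^ 2 + x * conj x)) * hu
  have hnorm := congrArg norm key
  simp only [norm_mul, norm_pow, Complex.norm_conj, Complex.norm_ofNat, Complex.norm_real,
    Real.norm_eq_abs, abs_of_pos (by positivity : 0 < r ^ 2 + 1)] at hnorm
  have hfactor : r * |r ^ 2 - 1| * (r - 1) ^ 2 = 0 := by linear_combination -hnorm
  rcases mul_eq_zero.mp hfactor with h0 | h0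
  · rcases mul_eq_zero.mp h0 with h0 | h0
    · exact absurd h0 hr.ne'
    · nlinarith [abs_eq_zero.mp h0]
  · nlinarith [pow_eq_zero_iff two_ne_zero |>.mp h0]

section QuadraticGrowth

variable {R : Type*}

theorem sq_sub_smul_one_mul_sub_smul_one [Ring R] [Algebra ℂ R] (A : R) (x y : ℂ) :
    (A - x • 1) ^ 2 * (A - y • 1) =
      A ^ 3 - (2 * x + y) • A ^ 2 + (x ^ 2 + 2 * x * y) • A - (x ^ 2 * y) • 1 := by
  simp only [pow_succ, pow_zero, one_mul, sub_mul, mul_sub, smul_mul_assoc, mul_smul_comm,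
    mul_one]
  module

theorem exists_pow_succ_eq_of_sq_mul_eq_zero [Ring R] [Algebra ℂ R] {A : R} {x y : ℂ}
    (hx : ‖x‖ ≤ 1) (hy : ‖y‖ ≤ 1) (h : (A - x • 1) ^ 2 * (A - y • 1) = 0) (m : ℕ) :
    ∃ c : ℂ, ‖c‖ ≤ ((m : ℝ) + 1) ^ 2 ∧
      A ^ (m + 1) = x ^ (m + 1) • 1 + (((m : ℂ) + 1) * x ^ m) • (A - x • 1) +
        c • (A - x • 1) ^ 2 := by
  set N := A - x • 1 with hN
  have hA : A = x • 1 + N := by rw [hN]; abel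
  have hNA : N * A = x • N + N ^ 2 := by rw [sq]; nth_rewrite 1 [hA]; simp [mul_add]
  have hN2A : N ^ 2 * A = y • N ^ 2 := by
    rwa [mul_sub, mul_smul_comm, mul_one, sub_eq_zero] at h
  induction m with
  | zero => exact ⟨0, by simp, by simp [← hA]⟩
  | succ m ih =>
    obtain ⟨c, hc, hpow⟩ := ih
    refine ⟨c * y + ((m : ℂ) + 1) * x ^ m, ?_, ?_⟩
    · calc ‖c * y + ((m : ℂ) + 1) * x ^ m‖ ≤ ‖c‖ * ‖y‖ + ((m : ℝ) + 1) * ‖x‖ ^ m := by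
            refine (norm_add_le _ _).trans_eq ?_
            rw [norm_mul, norm_mul, norm_pow, ← Nat.cast_succ, Complex.norm_natCast]
            push_cast; ring
        _ ≤ ((m : ℝ) + 1) ^ 2 * 1 + ((m : ℝ) + 1) * 1 := by
            gcongr
            exact pow_le_one₀ (norm_nonneg x) hx
        _ ≤ ((m + 1 : ℕ) + 1 : ℝ) ^ 2 := by push_cast; nlinarith
    · rw [pow_succ, hpow, add_mul, add_mul, smul_mul_assoc, smul_mul_assoc, smul_mul_assoc,
        one_mul, hNA, hN2A]
      nth_rewrite 1 [hA]
      push_cast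
      module

theorem exists_norm_pow_le_mul_sq_of_sq_mul_eq_zero [NormedRing R] [NormedAlgebra ℂ R] {A : R}
    {x y : ℂ} (hx : ‖x‖ ≤ 1) (hy : ‖y‖ ≤ 1) (h : (A - x • 1) ^ 2 * (A - y • 1) = 0) :
    ∃ C : ℝ, 0 < C ∧ ∀ n : ℕ, 1 ≤ n → ‖A ^ n‖ ≤ C * (n : ℝ) ^ 2 := by
  set N := A - x • 1
  refine ⟨1 + ‖(1 : R)‖ + ‖N‖ + ‖N ^ 2‖, by positivity, fun n hn => ?_⟩
  obtain ⟨m, rfl⟩ : ∃ m, n = m + 1 := ⟨n - 1, by omega⟩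
  obtain ⟨c, hc, hpow⟩ := exists_pow_succ_eq_of_sq_mul_eq_zero hx hy h m
  have hm : (1 : ℝ) ≤ (m : ℝ) + 1 := by simp
  have hxm : ‖x‖ ^ m ≤ 1 := pow_le_one₀ (norm_nonneg x) hx
  rw [hpow]
  calc ‖x ^ (m + 1) • (1 : R) + (((m : ℂ) + 1) * x ^ m) • N + c • N ^ 2‖
      ≤ ‖x‖ ^ (m + 1) * ‖(1 : R)‖ + ((m : ℝ) + 1) * ‖x‖ ^ m * ‖N‖ + ‖c‖ * ‖N ^ 2‖ := by
        refine (norm_add₃_le).trans_eq ?_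
        rw [norm_smul, norm_smul, norm_smul, norm_mul, norm_pow, norm_pow,
          ← Nat.cast_succ, Complex.norm_natCast]
        push_cast; ring
    _ ≤ ((m : ℝ) + 1) ^ 2 * (‖(1 : R)‖ + ‖N‖ + ‖N ^ 2‖) := by
        rw [mul_add, mul_add]
        gcongr
        · exact (pow_le_one₀ (norm_nonneg x) hx).trans (one_le_pow₀ hm)
        · nlinarith [hxm]
    _ ≤ (1 + ‖(1 : R)‖ + ‖N‖ + ‖N ^ 2‖) * ((m + 1 : ℕ) : ℝ) ^ 2 := by
        push_cast; nlinarith [norm_nonneg (1 : R)]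

end QuadraticGrowth

theorem quadratic_growth_of_fzero (A : Matrix (Fin 3) (Fin 3) ℂ) (hA : IsSU21 A)
    (hf : fdisc A.trace = 0) :
    ∃ c : ℝ, 0 < c ∧ ∀ n : ℕ, 1 ≤ n → ∀ i j : Fin 3,
      ‖(A ^ n) i j‖ ≤ c * (n : ℝ) ^ 2 := by
  obtain ⟨x, y, htr, hconj, hdet⟩ := Cubic.exists_double_root_of_discr_eq_zero
    (by rw [← ofReal_fdisc, hf, Complex.ofReal_zero])
  rw [neg_inj] at htr hdet
  have hx : ‖x‖ = 1 := norm_eq_one_of_conj_eq hdet.symm (htr ▸ hconj)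
  have hy : ‖y‖ = 1 := by simpa [hx] using congrArg norm hdet.symm
  have hfactor : (A - x • 1) ^ 2 * (A - y • 1) = 0 := by
    rw [sq_sub_smul_one_mul_sub_smul_one, A.pow_three_fin_three, hA.trace_adjugate, hA.1, hconj,
      htr, ← hdet]
    abel
  open scoped Matrix.Norms.Operator in
  obtain ⟨C, hC, hbound⟩ := exists_norm_pow_le_mul_sq_of_sq_mul_eq_zero hx.le hy.le hfactor
  exact ⟨C, hC, fun n hn i j => (Matrix.norm_entry_le_linfty_opNorm _ i j).trans (hbound n hn)⟩
end

section
/- Let λ be a nonzero complex number and set x = λ + conj(λ)/λ + 1/conj(λ). Then |x|² − 4·Re(x·λ/conj(λ)) + 3 = (|λ|² + 1)·|λ² − conj(λ)|² / |λ|⁴. Moreover, this quantity equals 0 if and only if λ³ = 1. -/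
/-!
Writing `‖z‖² = z * conj z` and `2 * Re z = z + conj z`, both sides become rational functions of
`λ` and `conj λ`, and the identity holds with `conj λ` replaced by an independent nonzero
variable. The right-hand side vanishes exactly when `λ² = conj λ`; taking norms this forces
`|λ| = 1`, and then `λ³ = λ * conj λ = 1`.
-/

open ComplexConjugate

namespace Complex

theorem sq_eq_conj_iff_pow_three_eq_one {l : ℂ} (hl : l ≠ 0) : l ^ 2 = conj l ↔ l ^ 3 = 1 := by
  have mul_conj_eq_one : ‖l‖ = 1 → l * conj l = 1 := fun h => by
    rw [mul_conj', h]; norm_num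
  constructor
  · intro h
    have hnorm : ‖l‖ = 1 := by
      have : ‖l‖ ^ 2 = ‖l‖ := by rw [← norm_pow, h, norm_conj]
      have := norm_pos_iff.mpr hl
      nlinarith
    rw [pow_succ', h, mul_conj_eq_one hnorm]
  · intro h
    apply mul_left_cancel₀ hl
    rw [mul_conj_eq_one (norm_eq_one_of_pow_eq_one h three_ne_zero), ← h]
    ring

theorem norm_sq_sub_four_re_add_three_eq {l : ℂ} (hl : l ≠ 0) :
    ‖l + conj l / l + 1 / conj l‖ ^ 2 - 4 * ((l + conj l / l + 1 / conj l) * l / conj l).re + 3 =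
      (‖l‖ ^ 2 + 1) * ‖l ^ 2 - conj l‖ ^ 2 / ‖l‖ ^ 4 := by
  have hc : conj l ≠ 0 := (map_ne_zero _).mpr hl
  apply ofReal_injective
  push_cast
  rw [show (4 : ℕ) = 2 * 2 from rfl, pow_mul]
  simp only [← mul_conj', re_eq_add_conj, map_add, map_mul, map_div₀, map_one, map_sub, map_pow,
    conj_conj]
  generalize conj l = c at hc ⊢
  field_simp
  ring

end Complex

theorem denominator_identity (l : ℂ) (hl : l ≠ 0) (x : ℂ)
    (hx : x = l + (starRingEnd ℂ) l / l + 1 / (starRingEnd ℂ) l) :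
    ‖x‖ ^ 2 - 4 * (x * l / (starRingEnd ℂ) l).re + 3 =
      (‖l‖ ^ 2 + 1) * ‖l ^ 2 - (starRingEnd ℂ) l‖ ^ 2 /
        ‖l‖ ^ 4 ∧
    (‖x‖ ^ 2 - 4 * (x * l / (starRingEnd ℂ) l).re + 3 = 0 ↔ l ^ 3 = 1) := by
  subst hx
  refine ⟨Complex.norm_sq_sub_four_re_add_three_eq hl, ?_⟩
  rw [Complex.norm_sq_sub_four_re_add_three_eq hl, div_eq_zero_iff, or_iff_left (by positivity),
    mul_eq_zero, or_iff_right (by positivity), sq_eq_zero_iff, norm_eq_zero, sub_eq_zero]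
  exact Complex.sq_eq_conj_iff_pow_three_eq_one hl
end

section
/- For every t ∈ ℂ, the cubic polynomial s³ − t·s² + conj(t)·s − 1 (in the complex variable s) has a repeated complex root if and only if f(t) = 0, where f(t) = |t|⁴ − 8·Re(t³) + 18·|t|² − 27. -/
open Polynomial

/-- The characteristic cubic `s³ − t·s² + conj(t)·s − 1`. -/
noncomputable def cubic (t : ℂ) : Polynomial ℂ :=
  X ^ 3 - C t * X ^ 2 + C ((starRingEnd ℂ) t) * X - 1

/-!
Over `ℂ` the cubic splits, so it has a repeated root exactly when its discriminant
`b²c² − 4ac³ − 4b³d − 27a²d² + 18abcd` vanishes; for `(a, b, c, d) = (1, −t, t̄, −1)` this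
discriminant is `|t|⁴ − 8 Re(t³) + 18 |t|² − 27`.
-/

open ComplexConjugate

theorem Polynomial.exists_two_le_rootMultiplicity_iff_not_nodup_roots {R : Type*} [CommRing R]
    [IsDomain R] (p : R[X]) : (∃ z, 2 ≤ p.rootMultiplicity z) ↔ ¬ p.roots.Nodup := by
  classical
  simp only [Multiset.nodup_iff_count_le_one, count_roots, not_forall, not_le]
  rfl

theorem Cubic.discr_eq_zero_iff_exists_two_le_rootMultiplicity {K : Type*} [Field K]
    [IsAlgClosed K] (P : Cubic K) (ha : P.a ≠ 0) :
    P.discr = 0 ↔ ∃ z, 2 ≤ P.toPoly.rootMultiplicity z := by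
  have hnodup := P.discr_ne_zero_iff_roots_nodup (φ := RingHom.id K) ha (IsAlgClosed.splits _)
  rw [Cubic.map_roots, Polynomial.map_id] at hnodup
  rw [Polynomial.exists_two_le_rootMultiplicity_iff_not_nodup_roots, ← hnodup, not_not]

noncomputable def cubicCoeffs (t : ℂ) : Cubic ℂ := ⟨1, -t, conj t, -1⟩

theorem cubicCoeffs_toPoly (t : ℂ) : (cubicCoeffs t).toPoly = cubic t := by
  simp only [Cubic.toPoly, cubic, cubicCoeffs, map_one, map_neg]
  ring

theorem cubicCoeffs_discr (t : ℂ) : (cubicCoeffs t).discr = fdisc t := by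
  have hnorm : (‖t‖ : ℂ) ^ 2 = t * conj t := by
    rw [Complex.mul_conj, Complex.normSq_eq_norm_sq, Complex.ofReal_pow]
  have hre : ((t ^ 3).re : ℂ) * 2 = t ^ 3 + conj t ^ 3 := by
    rw [← map_pow, Complex.add_conj]
    push_cast
    ring
  simp only [fdisc, Cubic.discr, cubicCoeffs]
  push_cast
  rw [show (‖t‖ : ℂ) ^ 4 = ((‖t‖ : ℂ) ^ 2) ^ 2 by ring, hnorm]
  linear_combination 4 * hre

theorem repeated_root_iff_fzero (t : ℂ) :
    (∃ z : ℂ, 2 ≤ (cubic t).rootMultiplicity z) ↔ fdisc t = 0 := by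
  rw [← cubicCoeffs_toPoly, ← (cubicCoeffs t).discr_eq_zero_iff_exists_two_le_rootMultiplicity
    one_ne_zero, cubicCoeffs_discr, Complex.ofReal_eq_zero]
end

section
/- Let t ∈ ℂ with f(t) < 0. Then the cubic polynomial s³ − t·s² + conj(t)·s − 1 has three pairwise distinct complex roots, each of modulus 1. -/
open Polynomial

/-!
The cubic is self-inversive: its roots `x, y, z` satisfy `x y z = 1` and
`x y + x z + y z = conj (x + y + z)`, so `1 / conj x` is again a root, and its discriminant
`((x - y) (x - z) (y - z))²` is `f(t)`. If a root `x` is off the unit circle, then `1 / conj x` is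
another root `y`, the third root `z = conj x / x` is on the unit circle, and conjugation fixes
`(x - y) (x - z) (y - z)`; the discriminant is then the square of a real number, contradicting
`f(t) < 0`. As `f(t) ≠ 0`, the roots are distinct.
-/

open ComplexConjugate

section RootTriple

variable {t x y z : ℂ}

theorem one_sub_mul_conj_prod_eq_zero (hsum : x + y + z = t)
    (hpair : x * y + x * z + y * z = conj t) (hprod : x * y * z = 1) :
    (1 - x * conj x) * (1 - y * conj x) * (1 - z * conj x) = 0 := by
  have hpair' : conj x * conj y + conj x * conj z + conj y * conj z = x + y + z := by
    simpa [hsum] using congrArg conj hpair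
  have hprod' : conj x * conj y * conj z = 1 := by simpa using congrArg conj hprod
  rw [← hsum, map_add, map_add] at hpair
  linear_combination conj x ^ 2 * hpair + conj x * hpair' - conj x ^ 3 * hprod - hprod'

theorem conj_vandermonde_eq (hprod : x * y * z = 1) (hyx : y * conj x = 1) :
    conj ((x - y) * (x - z) * (y - z)) = (x - y) * (x - z) * (y - z) := by
  have hx : x ≠ 0 := left_ne_zero_of_mul (left_ne_zero_of_mul_eq_one hprod)
  have hy : y ≠ 0 := right_ne_zero_of_mul (left_ne_zero_of_mul_eq_one hprod)
  have hxy : conj y * x = 1 := by simpa [mul_comm] using congrArg conj hyx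
  have hprod' : conj x * conj y * conj z = 1 := by simpa using congrArg conj hprod
  have ha : conj x = y⁻¹ := eq_inv_of_mul_eq_one_right hyx
  have hb : conj y = x⁻¹ := eq_inv_of_mul_eq_one_left hxy
  have hc : conj z = x * y := by
    rw [ha, hb] at hprod'
    field_simp at hprod'
    linear_combination hprod'
  have hz : z = (x * y)⁻¹ := eq_inv_of_mul_eq_one_right hprod
  simp only [map_mul, map_sub, ha, hb, hc]
  rw [hz]
  field_simp
  ring

theorem re_sq_nonneg_of_conj_eq {w : ℂ} (hw : conj w = w) : 0 ≤ (w ^ 2).re := by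
  rw [← Complex.conj_eq_iff_re.mp hw, ← Complex.ofReal_pow, Complex.ofReal_re]
  positivity

theorem cubic_eq_prod (hsum : x + y + z = t)
    (hpair : x * y + x * z + y * z = conj t) (hprod : x * y * z = 1) :
    cubic t = (X - C x) * (X - C y) * (X - C z) := by
  rw [cubic, ← hpair, ← hsum, ← C_1, ← hprod]
  simp only [map_add, map_mul]
  ring

theorem fdisc_eq_discr (hsum : x + y + z = t)
    (hpair : x * y + x * z + y * z = conj t) (hprod : x * y * z = 1) :
    (fdisc t : ℂ) = ((x - y) * (x - z) * (y - z)) ^ 2 := by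
  have hnorm : (‖t‖ : ℂ) ^ 2 = t * conj t := (Complex.mul_conj' t).symm
  have hfdisc : (fdisc t : ℂ) =
      (t * conj t) ^ 2 - 4 * (t ^ 3 + conj t ^ 3) + 18 * (t * conj t) - 27 := by
    simp only [fdisc, Complex.ofReal_sub, Complex.ofReal_add, Complex.ofReal_mul,
      Complex.ofReal_pow, Complex.ofReal_ofNat, Complex.re_eq_add_conj, map_pow]
    linear_combination ((‖t‖ : ℂ) ^ 2 + t * conj t + 18) * hnorm
  rw [hfdisc, ← hpair, ← hsum]
  linear_combination (4 * (x + y + z) ^ 3 + 27 * (1 + x * y * z)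
    - 18 * (x + y + z) * (x * y + x * z + y * z)) * hprod

theorem norm_eq_one_of_re_discr_neg (hsum : x + y + z = t)
    (hpair : x * y + x * z + y * z = conj t) (hprod : x * y * z = 1)
    (hD : (((x - y) * (x - z) * (y - z)) ^ 2).re < 0) : ‖x‖ = 1 := by
  have hxyz := one_sub_mul_conj_prod_eq_zero hsum hpair hprod
  rw [mul_eq_zero, mul_eq_zero] at hxyz
  rcases hxyz with (hx | hy) | hz
  · have hsq : ((‖x‖ ^ 2 : ℝ) : ℂ) = 1 := by
      rw [Complex.ofReal_pow, ← Complex.mul_conj']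
      linear_combination -hx
    exact (pow_eq_one_iff_of_nonneg (norm_nonneg x) two_ne_zero).mp (mod_cast hsq)
  · have hyx : y * conj x = 1 := by linear_combination -hy
    exact absurd (re_sq_nonneg_of_conj_eq (conj_vandermonde_eq hprod hyx)) hD.not_ge
  · have hzx : z * conj x = 1 := by linear_combination -hz
    have hprod' : x * z * y = 1 := by linear_combination hprod
    have hswap : ((x - z) * (x - y) * (z - y)) ^ 2 = ((x - y) * (x - z) * (y - z)) ^ 2 := by ring
    have := re_sq_nonneg_of_conj_eq (conj_vandermonde_eq hprod' hzx)
    rw [hswap] at this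
    exact absurd this hD.not_ge

theorem norm_eq_one_of_fdisc_neg (hsum : x + y + z = t)
    (hpair : x * y + x * z + y * z = conj t) (hprod : x * y * z = 1) (hf : fdisc t < 0) :
    ‖x‖ = 1 := by
  refine norm_eq_one_of_re_discr_neg hsum hpair hprod ?_
  rwa [← fdisc_eq_discr hsum hpair hprod, Complex.ofReal_re]

end RootTriple

theorem exists_vieta_cubic (t : ℂ) :
    ∃ x y z : ℂ, x + y + z = t ∧ x * y + x * z + y * z = conj t ∧ x * y * z = 1 := by
  set P : Cubic ℂ := ⟨1, -t, conj t, -1⟩ with hP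
  have ha : P.a ≠ 0 := one_ne_zero
  obtain ⟨x, y, z, h3⟩ :=
    (Cubic.splits_iff_roots_eq_three (φ := RingHom.id ℂ) ha).mp (IsAlgClosed.splits _)
  have hb := Cubic.b_eq_three_roots ha h3
  have hc := Cubic.c_eq_three_roots ha h3
  have hd := Cubic.d_eq_three_roots ha h3
  simp only [hP, RingHom.id_apply, one_mul] at hb hc hd
  exact ⟨x, y, z, by linear_combination hb, hc.symm, by linear_combination hd⟩

theorem roots_of_fneg (t : ℂ) (hf : fdisc t < 0) :
    ∃ l₁ l₂ l₃ : ℂ, l₁ ≠ l₂ ∧ l₁ ≠ l₃ ∧ l₂ ≠ l₃ ∧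
      (cubic t).IsRoot l₁ ∧ (cubic t).IsRoot l₂ ∧ (cubic t).IsRoot l₃ ∧
      ‖l₁‖ = 1 ∧ ‖l₂‖ = 1 ∧ ‖l₃‖ = 1 := by
  obtain ⟨x, y, z, hsum, hpair, hprod⟩ := exists_vieta_cubic t
  have hdiscr : (x - y) * (x - z) * (y - z) ≠ 0 := by
    intro h
    have := fdisc_eq_discr hsum hpair hprod
    rw [h, zero_pow two_ne_zero, Complex.ofReal_eq_zero] at this
    exact hf.ne this
  simp only [mul_ne_zero_iff, sub_ne_zero] at hdiscr
  obtain ⟨⟨hxy, hxz⟩, hyz⟩ := hdiscr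
  have hcubic := cubic_eq_prod hsum hpair hprod
  refine ⟨x, y, z, hxy, hxz, hyz, by simp [hcubic], by simp [hcubic], by simp [hcubic],
    norm_eq_one_of_fdisc_neg hsum hpair hprod hf, ?_, ?_⟩
  · exact norm_eq_one_of_fdisc_neg (x := y) (y := x) (z := z) (by linear_combination hsum)
      (by linear_combination hpair) (by linear_combination hprod) hf
  · exact norm_eq_one_of_fdisc_neg (x := z) (y := x) (z := y) (by linear_combination hsum)
      (by linear_combination hpair) (by linear_combination hprod) hf
end

section
/- The trace map from SU(2,1) to ℂ is surjective: for every t ∈ ℂ there exists A ∈ SU(2,1) with tr(A) = t. -/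
open Matrix

theorem trace_surjective : ∀ t : ℂ, ∃ A : Matrix (Fin 3) (Fin 3) ℂ, IsSU21 A ∧ A.trace = t := by
  intro t
  have hexp_mul : ∀ s r : ℝ, Complex.exp ((s:ℂ)*Complex.I) * Complex.exp ((r:ℂ)*Complex.I)
      = Complex.exp (((s+r:ℝ):ℂ)*Complex.I) := by
    intro s r; rw [← Complex.exp_add]; push_cast; ring_nf
  have hconj_exp : ∀ s : ℝ, (starRingEnd ℂ) (Complex.exp ((s:ℂ)*Complex.I))
      = Complex.exp (((-s:ℝ):ℂ)*Complex.I) := by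
    intro s; rw [← Complex.exp_conj]; congr 1; simp
  -- Step 1: choose ψ with Im(t e^{-iψ}) + sin(3ψ) = 0 via the intermediate value theorem
  obtain ⟨ψ, hψ⟩ : ∃ ψ : ℝ, (t * Complex.exp (((-ψ:ℝ):ℂ) * Complex.I)).im + Real.sin (3*ψ) = 0 := by
    set g : ℝ → ℝ := fun ψ => (t * Complex.exp (((-ψ:ℝ):ℂ) * Complex.I)).im + Real.sin (3*ψ) with hg
    have hcont : Continuous g := by
      apply Continuous.add
      · exact Complex.continuous_im.comp (continuous_const.mul
          (Complex.continuous_exp.comp (by continuity)))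
      · exact Real.continuous_sin.comp (continuous_const.mul continuous_id)
    have h0 : g 0 = t.im := by simp [hg]
    have hpi : g Real.pi = - t.im := by
      have e1 : (((-Real.pi:ℝ)):ℂ) * Complex.I = -(Real.pi * Complex.I) := by push_cast; ring
      have e2 : (3:ℝ) * Real.pi = (3:ℤ) * Real.pi := by push_cast; ring
      simp only [hg, e1, Complex.exp_neg, Complex.exp_pi_mul_I, e2, Real.sin_int_mul_pi]
      simp
    rcases le_total t.im 0 with h | h
    · have hmem : (0:ℝ) ∈ Set.Icc (g 0) (g Real.pi) := by rw [h0, hpi]; constructor <;> linarith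
      obtain ⟨ψ, _, hψ0⟩ := intermediate_value_Icc Real.pi_pos.le hcont.continuousOn hmem
      exact ⟨ψ, hψ0⟩
    · have hmem : (0:ℝ) ∈ Set.Icc (g Real.pi) (g 0) := by rw [h0, hpi]; constructor <;> linarith
      obtain ⟨ψ, _, hψ0⟩ := intermediate_value_Icc' Real.pi_pos.le hcont.continuousOn hmem
      exact ⟨ψ, hψ0⟩
  -- Step 2: build the matrix
  obtain ⟨x, hx⟩ : ∃ x : ℝ, x = ((t * Complex.exp (((-ψ:ℝ):ℂ) * Complex.I)).re - Real.cos (3*ψ)) / 2 :=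
    ⟨_, rfl⟩
  obtain ⟨y, hy⟩ : ∃ y : ℝ, y = Real.sqrt (max 0 (1 - x^2)) := ⟨_, rfl⟩
  obtain ⟨b, hb⟩ : ∃ b : ℝ, b = Real.sqrt (max 0 (x^2 - 1)) := ⟨_, rfl⟩
  have hkeyR : x^2 + y^2 - b^2 = 1 := by
    have h1 : y^2 = max 0 (1 - x^2) := by rw [hy]; exact Real.sq_sqrt (le_max_left _ _)
    have h2 : b^2 = max 0 (x^2 - 1) := by rw [hb]; exact Real.sq_sqrt (le_max_left _ _)
    rcases le_total (x^2) 1 with h | h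
    · rw [h1, h2, max_eq_right (by linarith), max_eq_left (by linarith)]; ring
    · rw [h1, h2, max_eq_left (by linarith), max_eq_right (by linarith)]; ring
  have hk : ((x:ℂ))^2 + ((y:ℂ))^2 - ((b:ℂ))^2 = 1 := by
    have h := congrArg (fun r : ℝ => (r:ℂ)) hkeyR; push_cast at h; exact h
  obtain ⟨c, hc⟩ : ∃ c : ℂ, c = Complex.exp (((ψ:ℝ):ℂ) * Complex.I) := ⟨_, rfl⟩
  obtain ⟨u, hu⟩ : ∃ u : ℂ, u = Complex.exp (((-(2*ψ):ℝ):ℂ) * Complex.I) := ⟨_, rfl⟩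
  have hconjc : (starRingEnd ℂ) c = Complex.exp (((-ψ:ℝ):ℂ)*Complex.I) := by
    rw [hc]; exact hconj_exp ψ
  have hconju : (starRingEnd ℂ) u = Complex.exp (((2*ψ:ℝ):ℂ)*Complex.I) := by
    rw [hu, hconj_exp]; norm_num
  have hcc : (starRingEnd ℂ) c * c = 1 := by
    rw [hconjc, hc, hexp_mul]; norm_num
  have hucc : u * (c * c) = 1 := by
    rw [hu, hc, hexp_mul, hexp_mul, show (-(2*ψ)+(ψ+ψ):ℝ)=0 by ring]; simp
  have hcc' : Complex.exp (-((ψ:ℂ) * Complex.I)) * c = 1 := by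
    rw [show -((ψ:ℂ)*Complex.I) = ((-ψ:ℝ):ℂ)*Complex.I by push_cast; ring, ← hconjc]; exact hcc
  have huu2 : Complex.exp ((ψ:ℂ) * Complex.I * 2) * u = 1 := by
    rw [show (ψ:ℂ)*Complex.I*2 = ((2*ψ:ℝ):ℂ)*Complex.I by push_cast; ring, ← hconju]
    rw [hconju, hu, hexp_mul]; norm_num
  refine ⟨!![u, 0, 0;
             0, c*((x:ℂ) + (y:ℂ)*Complex.I), c*(b:ℂ);
             0, c*(b:ℂ), c*((x:ℂ) - (y:ℂ)*Complex.I)], ⟨?_, ?_⟩, ?_⟩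
  · rw [Matrix.det_fin_three]
    simp only [Matrix.cons_val', Matrix.cons_val_zero, Matrix.cons_val_one, Matrix.head_cons,
      Matrix.empty_val', Matrix.cons_val_fin_one, Matrix.head_fin_const, Matrix.cons_val_two,
      Matrix.tail_cons, Matrix.of_apply]
    linear_combination u*c*c*hk - u*c*c*((y:ℂ)^2)*Complex.I_sq + hucc
  · ext i j
    fin_cases i <;> fin_cases j <;>
      simp [-mul_eq_zero, Jmat, Matrix.mul_apply, Fin.sum_univ_three, Matrix.conjTranspose_apply,
        _root_.map_mul, hconjc, hconju, Matrix.vecHead, Matrix.vecTail]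
    all_goals try ring
    all_goals try exact huu2
    all_goals first
      | linear_combination Complex.exp (-((ψ:ℂ) * Complex.I)) * c * hk
          - Complex.exp (-((ψ:ℂ) * Complex.I)) * c * ((y:ℂ)^2) * Complex.I_sq + hcc'
      | linear_combination -(Complex.exp (-((ψ:ℂ) * Complex.I)) * c) * hk
          + Complex.exp (-((ψ:ℂ) * Complex.I)) * c * ((y:ℂ)^2) * Complex.I_sq - hcc'
  · have h2x : ((2*x:ℝ):ℂ) = t * Complex.exp (((-ψ:ℝ):ℂ) * Complex.I)
        - Complex.exp (((-(3*ψ):ℝ):ℂ) * Complex.I) := by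
      apply Complex.ext
      · simp only [Complex.ofReal_re, Complex.sub_re, Complex.exp_ofReal_mul_I_re, Real.cos_neg]
        rw [hx]; ring
      · simp only [Complex.ofReal_im, Complex.sub_im, Complex.exp_ofReal_mul_I_im, Real.sin_neg]
        linarith [hψ]
    rw [Matrix.trace_fin_three]
    simp only [Matrix.cons_val', Matrix.cons_val_zero, Matrix.cons_val_one, Matrix.head_cons,
      Matrix.empty_val', Matrix.cons_val_fin_one, Matrix.head_fin_const, Matrix.cons_val_two,
      Matrix.tail_cons, Matrix.of_apply]
    have e1 : Complex.exp (((ψ:ℝ):ℂ)*Complex.I) * Complex.exp (((-ψ:ℝ):ℂ)*Complex.I) = 1 := by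
      rw [hexp_mul, show (ψ + -ψ : ℝ) = 0 by ring]; simp
    have e2 : Complex.exp (((ψ:ℝ):ℂ)*Complex.I) * Complex.exp (((-(3*ψ):ℝ):ℂ)*Complex.I)
        = Complex.exp (((-(2*ψ):ℝ):ℂ)*Complex.I) := by
      rw [hexp_mul, show (ψ + -(3*ψ) : ℝ) = -(2*ψ) by ring]
    rw [hu, hc]
    push_cast at h2x e1 e2 ⊢
    linear_combination Complex.exp ((ψ:ℂ)*Complex.I) * h2x + t * e1 - e2
end
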